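/- arXiv:1603.09013 — 2 statements merged into one kernel-verified Lean document; each statement's English description precedes it below -/
import Mathlib

section
/- The reduced word 𝐢^D for the longest element of W(D_n) is i-semi-adapted for every i ∈ {1,…,n}. -/
open scoped Classical

noncomputable section

/-- Standard basis vector `e i` (1-based coordinates, ambient `ℤ^n` sits inside `ℕ → ℤ`). -/
def stdE (i : ℕ) : ℕ → ℤ := fun j => if j = i then 1 else 0

/-- Type `D_n` simple roots: `α_i = e_i - e_(i+1)` for `1 ≤ i ≤ n-1`, `α_n = e_(n-1) + e_n`. -/
def alphaD (n i : ℕ) : ℕ → ℤ := if i = n then stdE (n-1) + stdE n else stdE i - stdE (i+1)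

/-- Positive root `β_(i,k) = α_i + ⋯ + α_k = e_i - e_(k+1)` (for `1 ≤ i ≤ k ≤ n-1`). -/
def betaD (i k : ℕ) : ℕ → ℤ := stdE i - stdE (k+1)

/-- Positive root `γ_(i,k) = α_i + ⋯ + α_(n-2) + α_n + α_(n-1) + ⋯ + α_k = e_i + e_k`
(for `1 ≤ i < k ≤ n`). -/
def gammaD (i k : ℕ) : ℕ → ℤ := stdE i + stdE k

/-- `β` is a positive root of type `D_n`. -/
def PosRootD (n : ℕ) (β : ℕ → ℤ) : Prop :=
  (∃ i k, 1 ≤ i ∧ i ≤ k ∧ k ≤ n-1 ∧ β = betaD i k) ∨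
  (∃ i k, 1 ≤ i ∧ i < k ∧ k ≤ n ∧ β = gammaD i k)

/-- The simple reflection `s_i` of `W(D_n)` acting on `ℤ^n`: for `i ≤ n-1` it swaps
coordinates `i` and `i+1`; `s_n` swaps coordinates `n-1` and `n` and negates both. -/
def sDap (n i : ℕ) (v : ℕ → ℤ) : ℕ → ℤ :=
  if i = n then fun j => if j = n-1 then -(v n) else if j = n then -(v (n-1)) else v j
  else fun j => if j = i then v (i+1) else if j = i+1 then v i else v j

/-- The action of the product `s_(i₁) ⋯ s_(i_N)` on a vector. -/
def actD (n : ℕ) (w : List ℕ) (v : ℕ → ℤ) : ℕ → ℤ := w.foldr (sDap n) v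

/-- The induced root sequence `β_k = s_(i₁)⋯s_(i_(k-1)) (α_(i_k))` of a word (0-indexed). -/
def rootSeqD (n : ℕ) (w : List ℕ) : List (ℕ → ℤ) :=
  (List.range w.length).map fun k => actD n (w.take k) (alphaD n (w.getD k 0))

/-- The block `(i, i+1, …, n-1, n, n-2, n-3, …, i)` of the word `𝐢^D`. -/
def blockD (n i : ℕ) : List ℕ :=
  ((List.range (n-i)).map (· + i)) ++ [n] ++ (((List.range (n-1-i)).map (· + i)).reverse)

/-- The word `𝐢^D`: the blocks `(i, i+1, …, n-1, n, n-2, …, i)` for `i = 1, …, n-2`,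
followed by `(n-1, n)`. -/
def wordD (n : ℕ) : List ℕ :=
  ((List.range (n-2)).flatMap fun i' => blockD n (i'+1)) ++ [n-1, n]

/-- Standard inner product on `ℤ^n` (coordinates `1,…,n`; index `0` unused). -/
def ipD (n : ℕ) (v u : ℕ → ℤ) : ℤ := ∑ j ∈ Finset.range (n+1), v j * u j

/-- Dynkin-diagram adjacency of indices in type `D_n`: `{j,k} = {m, m+1}` for some
`m ≤ n-2`, or `{j,k} = {n-2, n}`. -/
def adjD (n j k : ℕ) : Prop :=
  (∃ m, m ≤ n-2 ∧ ((j = m ∧ k = m+1) ∨ (k = m ∧ j = m+1))) ∨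
  ((j = n-2 ∧ k = n) ∨ (k = n-2 ∧ j = n))

/-- A braid move: `two k` interchanges the letters at positions `k, k+1`;
`three k` replaces the letters `(a, b, a)` at positions `k, k+1, k+2` by `(b, a, b)`. -/
inductive BraidMove where
  | two (k : ℕ)
  | three (k : ℕ)

/-- The effect of a braid move on a word. -/
def moveWord (w : List ℕ) : BraidMove → List ℕ
  | .two k => (w.set k (w.getD (k+1) 0)).set (k+1) (w.getD k 0)
  | .three k => ((w.set k (w.getD (k+1) 0)).set (k+1) (w.getD k 0)).set (k+2) (w.getD (k+1) 0)

/-- Validity of a braid move on a word, in type `D_n`: a 2-term move needs distinct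
non-adjacent letters, a 3-term move needs the pattern `(a, b, a)` with `a, b` adjacent. -/
def moveOKD (n : ℕ) (w : List ℕ) : BraidMove → Prop
  | .two k => k + 1 < w.length ∧ w.getD k 0 ≠ w.getD (k+1) 0 ∧
      ¬ adjD n (w.getD k 0) (w.getD (k+1) 0)
  | .three k => k + 2 < w.length ∧ w.getD (k+2) 0 = w.getD k 0 ∧
      adjD n (w.getD k 0) (w.getD (k+1) 0)

/-- The semi-adaptedness condition for the letter `i`: any 3-term braid move must be applied
where the three consecutive induced roots are `(β, β + α_i, α_i)`. -/
def semiCondD (n i : ℕ) (w : List ℕ) : BraidMove → Prop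
  | .two _ => True
  | .three k =>
      (rootSeqD n w).getD (k+1) 0 = (rootSeqD n w).getD k 0 + alphaD n i ∧
      (rootSeqD n w).getD (k+2) 0 = alphaD n i

/-- Validity of a sequence of braid moves, each allowed by `i`-semi-adaptedness. -/
def validSeqD (n i : ℕ) : List ℕ → List BraidMove → Prop
  | _, [] => True
  | w, m :: σ => moveOKD n w m ∧ semiCondD n i w m ∧ validSeqD n i (moveWord w m) σ

/-- `w` is `i`-semi-adapted: some sequence of braid moves allowed by `i`-semi-adaptedness
takes `w` to a word whose first letter is `i`. -/
def SemiAdaptedD (n i : ℕ) (w : List ℕ) : Prop :=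
  ∃ σ : List BraidMove, validSeqD n i w σ ∧ (σ.foldl moveWord w).getD 0 0 = i


/-!
Write `𝐢^D = B₁ ⋯ B_{n-2} (n-1, n)` with `Bⱼ = (j, …, n-1, n, n-2, …, j)`. A letter `a` standing
right after `B₁ ⋯ Bⱼ` can be carried to the front of `Bⱼ`: it commutes past the letters far from
it, and two braid moves carry it across the letters `a-1, a` of the block (resp. across the fork
`n-2, n-1, n`, which turns a travelling `n` into `n-1` and vice versa). A braid move on
`(c, b, c)` after a prefix `u` sees the roots `u α_c, u (α_b + α_c), u α_b`, so it is allowed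
exactly when `u α_b = α_i`; this holds since every block `Bⱼ` with `j < a ≤ n-2` fixes `α_a` and
every block swaps `α_{n-1}` and `α_n`. For `i ≤ n-2` the letter `i` heading `B_i` travels through
`B_{i-1}, …, B₁` unchanged; for `i ∈ {n-1, n}` it starts in the final pair `(n-1, n)` and
alternates between `n-1` and `n`.
-/

lemma adjD_iff {n j k : ℕ} :
    adjD n j k ↔ (j ≤ n - 2 ∧ k = j + 1) ∨ (k ≤ n - 2 ∧ j = k + 1) ∨
      (j = n - 2 ∧ k = n) ∨ (k = n - 2 ∧ j = n) := by
  constructor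
  · rintro (⟨m, hm, ⟨rfl, rfl⟩ | ⟨rfl, rfl⟩⟩ | h | h) <;> omega
  · rintro (⟨hj, rfl⟩ | ⟨hk, rfl⟩ | h | h)
    · exact Or.inl ⟨j, hj, Or.inl ⟨rfl, rfl⟩⟩
    · exact Or.inl ⟨k, hk, Or.inr ⟨rfl, rfl⟩⟩
    · exact Or.inr (Or.inl h)
    · exact Or.inr (Or.inr h)

lemma sDap_add (n m : ℕ) (u v : ℕ → ℤ) : sDap n m (u + v) = sDap n m u + sDap n m v := by
  unfold sDap
  split_ifs <;> funext j <;> simp only [Pi.add_apply] <;> split_ifs <;> ring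

lemma sDap_neg (n m : ℕ) (v : ℕ → ℤ) : sDap n m (-v) = -sDap n m v := by
  unfold sDap
  split_ifs <;> funext j <;> simp only [Pi.neg_apply] <;> split_ifs <;> rfl

lemma sDap_alphaD_self {n m : ℕ} (hn : 1 ≤ n) : sDap n m (alphaD n m) = -alphaD n m := by
  unfold sDap alphaD
  split_ifs <;> funext j <;> simp only [stdE, Pi.neg_apply, Pi.add_apply, Pi.sub_apply] <;>
    split_ifs <;> omega

lemma sDap_alphaD_of_adj {n m a : ℕ} (hn : 2 ≤ n) (h : adjD n m a) :
    sDap n m (alphaD n a) = alphaD n a + alphaD n m := by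
  rw [adjD_iff] at h
  unfold sDap alphaD
  split_ifs <;> funext j <;> simp only [stdE, Pi.add_apply, Pi.sub_apply] <;>
    split_ifs <;> omega

lemma sDap_alphaD_of_not_adj {n m a : ℕ} (ha : a ≤ n) (hne : m ≠ a)
    (h : ¬ adjD n m a) : sDap n m (alphaD n a) = alphaD n a := by
  rw [adjD_iff] at h
  unfold sDap alphaD
  split_ifs <;> funext j <;> simp only [stdE, Pi.add_apply, Pi.sub_apply] <;>
    split_ifs <;> omega

lemma adjD_comm {n a b : ℕ} : adjD n a b ↔ adjD n b a := by
  simp only [adjD_iff]; omega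

lemma sDap_sDap_alphaD_of_adj {n a b : ℕ} (hn : 2 ≤ n) (h : adjD n a b) :
    sDap n a (sDap n b (alphaD n a)) = alphaD n b := by
  rw [sDap_alphaD_of_adj hn (adjD_comm.mp h), sDap_add, sDap_alphaD_self (by omega),
    sDap_alphaD_of_adj hn h]
  abel

lemma actD_nil (n : ℕ) (v : ℕ → ℤ) : actD n [] v = v := rfl

lemma actD_cons (n a : ℕ) (w : List ℕ) (v : ℕ → ℤ) :
    actD n (a :: w) v = sDap n a (actD n w v) := rfl

lemma actD_append (n : ℕ) (u w : List ℕ) (v : ℕ → ℤ) :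
    actD n (u ++ w) v = actD n u (actD n w v) :=
  List.foldr_append

lemma actD_add (n : ℕ) (w : List ℕ) (u v : ℕ → ℤ) :
    actD n w (u + v) = actD n w u + actD n w v := by
  induction w with
  | nil => rfl
  | cons a w ih => rw [actD_cons, ih, sDap_add]; rfl

lemma actD_alphaD_of_forall_not_adj {n a : ℕ} {w : List ℕ} (ha : a ≤ n)
    (h : ∀ m ∈ w, m ≠ a ∧ ¬ adjD n m a) : actD n w (alphaD n a) = alphaD n a := by
  induction w with
  | nil => rfl
  | cons m w ih =>
    rw [List.forall_mem_cons] at h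
    rw [actD_cons, ih h.2, sDap_alphaD_of_not_adj ha h.1.1 h.1.2]

lemma actD_fork_alphaD_n {n : ℕ} (hn : 2 ≤ n) :
    actD n [n - 2, n - 1, n, n - 2] (alphaD n n) = alphaD n (n - 1) := by
  simp (disch := first | omega | (rw [adjD_iff]; omega)) only [actD_cons, actD_nil, sDap_add,
    sDap_neg, sDap_alphaD_self, sDap_alphaD_of_adj, sDap_alphaD_of_not_adj]
  abel

lemma actD_fork_alphaD_sub_one {n : ℕ} (hn : 2 ≤ n) :
    actD n [n - 2, n - 1, n, n - 2] (alphaD n (n - 1)) = alphaD n n := by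
  simp (disch := first | omega | (rw [adjD_iff]; omega)) only [actD_cons, actD_nil, sDap_add,
    sDap_neg, sDap_alphaD_self, sDap_alphaD_of_adj, sDap_alphaD_of_not_adj]
  abel

lemma range'_eq_append_cons_cons {s l b : ℕ} (hsb : s ≤ b) (hb : b + 2 ≤ s + l) :
    List.range' s l =
      List.range' s (b - s) ++ b :: (b + 1) :: List.range' (b + 2) (s + l - (b + 2)) := by
  obtain ⟨m, rfl⟩ : ∃ m, l = (b - s) + (m + 1 + 1) := ⟨s + l - (b + 2), by omega⟩
  rw [← List.range'_append, List.range'_succ, List.range'_succ]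
  simp only [Nat.one_mul, show s + (b - s) = b by omega,
    show s + (b - s + (m + 1 + 1)) - (b + 2) = m by omega]

lemma blockD_eq_range' (n j : ℕ) :
    blockD n j = List.range' j (n - j) ++ n :: (List.range' j (n - 1 - j)).reverse := by
  simp only [blockD, List.range'_eq_map_range, add_comm j, List.append_assoc,
    List.singleton_append]

section Blocks

variable {n j : ℕ}

lemma exists_blockD_eq_of_lt {a : ℕ} (hja : j < a) (ha : a ≤ n - 2) :
    ∃ A M : List ℕ, blockD n j = A ++ (a - 1) :: a :: (M ++ a :: (a - 1) :: A.reverse) ∧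
      (∀ m ∈ A, m ≠ a ∧ ¬ adjD n m a) ∧ ∀ m ∈ M, m ≠ a - 1 ∧ ¬ adjD n m (a - 1) := by
  refine ⟨List.range' j (a - 1 - j),
    List.range' (a + 1) (n - 1 - a) ++ n :: (List.range' (a + 1) (n - 2 - a)).reverse, ?_,
    fun m hm => ?_, fun m hm => ?_⟩
  · rw [blockD_eq_range', range'_eq_append_cons_cons (b := a - 1) (by omega) (by omega),
      range'_eq_append_cons_cons (s := j) (l := n - 1 - j) (b := a - 1) (by omega) (by omega)]
    simp only [show a - 1 + 1 = a by omega, show a - 1 + 2 = a + 1 by omega,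
      show j + (n - j) - (a + 1) = n - 1 - a by omega,
      show j + (n - 1 - j) - (a + 1) = n - 2 - a by omega, List.reverse_append,
      List.reverse_cons]
    simp
  all_goals simp [adjD_iff] at hm ⊢; omega

lemma exists_blockD_eq_fork (hn : 2 ≤ n) (hj : j ≤ n - 2) :
    ∃ A : List ℕ, blockD n j = A ++ [n - 2, n - 1, n, n - 2] ++ A.reverse ∧
      ∀ m ∈ A, (m ≠ n - 1 ∧ ¬ adjD n m (n - 1)) ∧ (m ≠ n ∧ ¬ adjD n m n) := by
  refine ⟨List.range' j (n - 2 - j), ?_, fun m hm => ?_⟩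
  · rw [blockD_eq_range', show n - j = (n - 2 - j) + 2 by omega,
      show n - 1 - j = (n - 2 - j) + 1 by omega, ← List.range'_append, ← List.range'_append]
    simp [show j + (n - 2 - j) = n - 2 by omega, List.range'_succ, show n - 2 + 1 = n - 1 by omega]
  · simp [adjD_iff] at hm ⊢; omega

lemma actD_blockD_alphaD_of_lt {a : ℕ} (hja : j < a) (ha : a ≤ n - 2) :
    actD n (blockD n j) (alphaD n a) = alphaD n a := by
  obtain ⟨A, M, hblock, hA, hM⟩ := exists_blockD_eq_of_lt (n := n) hja ha
  have hadj : adjD n a (a - 1) := by rw [adjD_iff]; omega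
  rw [hblock, actD_append, actD_cons, actD_cons, actD_append, actD_cons, actD_cons,
    actD_alphaD_of_forall_not_adj (by omega) (by simpa using hA),
    sDap_sDap_alphaD_of_adj (by omega) hadj, actD_alphaD_of_forall_not_adj (by omega) hM,
    sDap_sDap_alphaD_of_adj (by omega) (adjD_comm.mp hadj),
    actD_alphaD_of_forall_not_adj (by omega) hA]

lemma actD_blockD_alphaD_n (hn : 2 ≤ n) (hj : j ≤ n - 2) :
    actD n (blockD n j) (alphaD n n) = alphaD n (n - 1) := by
  obtain ⟨A, hblock, hA⟩ := exists_blockD_eq_fork hn hj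
  rw [hblock, actD_append, actD_append,
    actD_alphaD_of_forall_not_adj le_rfl (by simpa using fun m hm => (hA m hm).2),
    actD_fork_alphaD_n hn, actD_alphaD_of_forall_not_adj (by omega) fun m hm => (hA m hm).1]

lemma actD_blockD_alphaD_sub_one (hn : 2 ≤ n) (hj : j ≤ n - 2) :
    actD n (blockD n j) (alphaD n (n - 1)) = alphaD n n := by
  obtain ⟨A, hblock, hA⟩ := exists_blockD_eq_fork hn hj
  rw [hblock, actD_append, actD_append,
    actD_alphaD_of_forall_not_adj (by omega) (by simpa using fun m hm => (hA m hm).1),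
    actD_fork_alphaD_sub_one hn, actD_alphaD_of_forall_not_adj le_rfl fun m hm => (hA m hm).2]

end Blocks

def blocksD (n j : ℕ) : List ℕ := (List.range j).flatMap fun t => blockD n (t + 1)

lemma blocksD_succ (n j : ℕ) : blocksD n (j + 1) = blocksD n j ++ blockD n (j + 1) := by
  simp [blocksD, List.range_succ]

lemma wordD_eq_blocksD_append (n : ℕ) : wordD n = blocksD n (n - 2) ++ [n - 1, n] := rfl

lemma exists_wordD_eq_blocksD_append {n k : ℕ} (hk : k ≤ n - 2) :
    ∃ t, wordD n = blocksD n k ++ t := by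
  rw [wordD_eq_blocksD_append, blocksD, show n - 2 = k + (n - 2 - k) by omega, List.range_add,
    List.flatMap_append, List.append_assoc]
  exact ⟨_, rfl⟩

lemma rootSeqD_getD {n k : ℕ} {w : List ℕ} (hk : k < w.length) :
    (rootSeqD n w).getD k 0 = actD n (w.take k) (alphaD n (w.getD k 0)) := by
  unfold rootSeqD
  rw [List.getD_eq_getElem _ _ (by simpa using hk)]
  simp

lemma moveWord_two_append (u r : List ℕ) (b c : ℕ) :
    moveWord (u ++ b :: c :: r) (.two u.length) = u ++ c :: b :: r := by
  simp [moveWord, List.set_append_right]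

lemma moveWord_three_append (u r : List ℕ) (b c : ℕ) :
    moveWord (u ++ c :: b :: c :: r) (.three u.length) = u ++ b :: c :: b :: r := by
  simp [moveWord, List.set_append_right]

lemma semiAdaptedD_cons (n i : ℕ) (r : List ℕ) : SemiAdaptedD n i (i :: r) :=
  ⟨[], trivial, rfl⟩

namespace SemiAdaptedD

variable {n i j : ℕ} {P : List ℕ}

lemma of_moveWord {w : List ℕ} {m : BraidMove} (hok : moveOKD n w m)
    (hcond : semiCondD n i w m) (h : SemiAdaptedD n i (moveWord w m)) : SemiAdaptedD n i w :=
  let ⟨σ, hσ, hfirst⟩ := h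
  ⟨m :: σ, ⟨hok, hcond, hσ⟩, hfirst⟩

lemma of_commute {b c : ℕ} {w : List ℕ} (u r : List ℕ) (hw : w = u ++ b :: c :: r)
    (hbc : b ≠ c ∧ ¬ adjD n b c) (h : SemiAdaptedD n i (u ++ c :: b :: r)) :
    SemiAdaptedD n i w := by
  subst hw
  refine of_moveWord (m := .two u.length) ?_ trivial (by rwa [moveWord_two_append])
  simpa [moveOKD, List.getD_append_right] using hbc

lemma of_commute_append {c : ℕ} {w : List ℕ} (u v r : List ℕ) (hw : w = u ++ v ++ c :: r)
    (hv : ∀ b ∈ v, b ≠ c ∧ ¬ adjD n b c) (h : SemiAdaptedD n i (u ++ c :: (v ++ r))) :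
    SemiAdaptedD n i w := by
  subst hw
  induction v generalizing u with
  | nil => simpa using h
  | cons b v ih =>
    rw [List.forall_mem_cons] at hv
    have h' : SemiAdaptedD n i (u ++ [b] ++ c :: (v ++ r)) :=
      of_commute u (v ++ r) (by simp) hv.1 (by simpa using h)
    simpa using ih (u ++ [b]) hv.2 h'

lemma of_braid {b c : ℕ} {w : List ℕ} (u r : List ℕ) (hw : w = u ++ c :: b :: c :: r)
    (hn : 2 ≤ n) (hadj : adjD n c b) (hroot : actD n u (alphaD n b) = alphaD n i)
    (h : SemiAdaptedD n i (u ++ b :: c :: b :: r)) : SemiAdaptedD n i w := by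
  subst hw
  refine of_moveWord (m := .three u.length) ?_ ?_ (by rwa [moveWord_three_append])
  · simpa [moveOKD, List.getD_append_right] using hadj
  · simp only [semiCondD]
    rw [rootSeqD_getD (by simp), rootSeqD_getD (by simp), rootSeqD_getD (by simp)]
    simp only [List.getD_append_right _ _ _ _ (Nat.le_add_right _ _), Nat.add_sub_cancel_left,
      List.getD_cons_succ, List.getD_cons_zero, List.take_length_add_append, List.take_left',
      List.getD_append_right _ _ _ _ le_rfl, Nat.sub_self, List.take_succ_cons, List.take_zero,
      actD_append, actD_cons, actD_nil]
    rw [sDap_alphaD_of_adj hn hadj, sDap_sDap_alphaD_of_adj hn hadj, actD_add, hroot, add_comm]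
    exact ⟨rfl, rfl⟩

lemma append_blockD_of_lt {a : ℕ} (hja : j < a) (ha : a ≤ n - 2)
    (hP : actD n P (alphaD n a) = alphaD n i) (h : ∀ r, SemiAdaptedD n i (P ++ a :: r))
    (r : List ℕ) : SemiAdaptedD n i (P ++ blockD n j ++ a :: r) := by
  obtain ⟨A, M, hblock, hA, hM⟩ := exists_blockD_eq_of_lt (n := n) hja ha
  have hadj : adjD n a (a - 1) := by rw [adjD_iff]; omega
  have hrootA : actD n (P ++ A) (alphaD n a) = alphaD n i := by
    rw [actD_append, actD_alphaD_of_forall_not_adj (by omega) hA, hP]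
  have hrootM : actD n (P ++ A ++ (a - 1) :: a :: M) (alphaD n (a - 1)) = alphaD n i := by
    rw [actD_append, actD_cons, actD_cons, actD_alphaD_of_forall_not_adj (by omega) hM,
      sDap_sDap_alphaD_of_adj (by omega) (adjD_comm.mp hadj), hrootA]
  rw [hblock]
  refine of_commute_append (c := a) (P ++ A ++ (a - 1) :: a :: M ++ [a, a - 1]) A.reverse r
    (by simp) (by simpa using hA) ?_
  refine of_braid (P ++ A ++ (a - 1) :: a :: M) (A.reverse ++ r) (by simp) (by omega) hadj
    hrootM ?_
  refine of_commute_append (P ++ A ++ [a - 1, a]) M (a :: (a - 1) :: (A.reverse ++ r))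
    (by simp) hM ?_
  refine of_braid (P ++ A) (M ++ a :: (a - 1) :: (A.reverse ++ r)) (by simp) (by omega)
    (adjD_comm.mp hadj) hrootA ?_
  exact of_commute_append P A ((a - 1) :: a :: (M ++ a :: (a - 1) :: (A.reverse ++ r)))
    (by simp) hA (h _)

lemma append_blockD_n (hn : 2 ≤ n) (hj : j ≤ n - 2)
    (hP : actD n P (alphaD n (n - 1)) = alphaD n i)
    (h : ∀ r, SemiAdaptedD n i (P ++ (n - 1) :: r)) (r : List ℕ) :
    SemiAdaptedD n i (P ++ blockD n j ++ n :: r) := by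
  obtain ⟨A, hblock, hA⟩ := exists_blockD_eq_fork hn hj
  have hadj : adjD n (n - 2) (n - 1) := by rw [adjD_iff]; omega
  have hrootA : actD n (P ++ A) (alphaD n (n - 1)) = alphaD n i := by
    rw [actD_append, actD_alphaD_of_forall_not_adj (by omega) fun m hm => (hA m hm).1, hP]
  have hrootFork : actD n (P ++ A ++ [n - 2, n - 1]) (alphaD n (n - 2)) = alphaD n i := by
    rw [actD_append, actD_cons, actD_cons, actD_nil, sDap_sDap_alphaD_of_adj hn hadj, hrootA]
  rw [hblock]
  refine of_commute_append (c := n) (P ++ A ++ [n - 2, n - 1, n, n - 2]) A.reverse r (by simp)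
    (by simpa using fun m hm => (hA m hm).2) ?_
  refine of_braid (b := n - 2) (c := n) (P ++ A ++ [n - 2, n - 1]) (A.reverse ++ r) (by simp)
    hn (by rw [adjD_iff]; omega) hrootFork ?_
  refine of_braid (P ++ A) (n :: (n - 2) :: (A.reverse ++ r)) (by simp) hn hadj hrootA ?_
  exact of_commute_append P A ((n - 2) :: (n - 1) :: n :: (n - 2) :: (A.reverse ++ r)) (by simp)
    (fun m hm => (hA m hm).1) (h _)

lemma append_blockD_sub_one (hn : 2 ≤ n) (hj : j ≤ n - 2)
    (hP : actD n P (alphaD n n) = alphaD n i) (h : ∀ r, SemiAdaptedD n i (P ++ n :: r))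
    (r : List ℕ) : SemiAdaptedD n i (P ++ blockD n j ++ (n - 1) :: r) := by
  obtain ⟨A, hblock, hA⟩ := exists_blockD_eq_fork hn hj
  have hadj : adjD n (n - 2) n := by rw [adjD_iff]; omega
  have hrootA : actD n (P ++ A) (alphaD n n) = alphaD n i := by
    rw [actD_append, actD_alphaD_of_forall_not_adj le_rfl fun m hm => (hA m hm).2, hP]
  have hrootFork : actD n (P ++ A ++ [n - 2, n]) (alphaD n (n - 2)) = alphaD n i := by
    rw [actD_append, actD_cons, actD_cons, actD_nil, sDap_sDap_alphaD_of_adj hn hadj, hrootA]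
  rw [hblock]
  refine of_commute_append (c := n - 1) (P ++ A ++ [n - 2, n - 1, n, n - 2]) A.reverse r (by simp)
    (by simpa using fun m hm => (hA m hm).1) ?_
  refine of_commute (b := n - 1) (c := n) (P ++ A ++ [n - 2])
    ((n - 2) :: (n - 1) :: (A.reverse ++ r)) (by simp) (by rw [adjD_iff]; omega) ?_
  refine of_braid (b := n - 2) (c := n - 1) (P ++ A ++ [n - 2, n]) (A.reverse ++ r) (by simp)
    hn (by rw [adjD_iff]; omega) hrootFork ?_
  refine of_braid (P ++ A) ((n - 1) :: (n - 2) :: (A.reverse ++ r)) (by simp) hn hadj hrootA ?_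
  exact of_commute_append P A ((n - 2) :: n :: (n - 1) :: (n - 2) :: (A.reverse ++ r)) (by simp)
    (fun m hm => (hA m hm).2) (h _)

end SemiAdaptedD

lemma semiAdaptedD_wordD_of_le_sub_two {n i : ℕ} (hi1 : 1 ≤ i) (hi : i ≤ n - 2) :
    SemiAdaptedD n i (wordD n) := by
  have key : ∀ j < i, actD n (blocksD n j) (alphaD n i) = alphaD n i ∧
      ∀ r, SemiAdaptedD n i (blocksD n j ++ i :: r) := by
    intro j
    induction j with
    | zero => exact fun _ => ⟨rfl, semiAdaptedD_cons n i⟩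
    | succ j ih =>
      intro hj
      obtain ⟨hroot, hsa⟩ := ih (by omega)
      rw [blocksD_succ, actD_append, actD_blockD_alphaD_of_lt hj hi]
      exact ⟨hroot, SemiAdaptedD.append_blockD_of_lt hj hi hroot hsa⟩
  obtain ⟨t, ht⟩ := exists_wordD_eq_blocksD_append (n := n) (k := i - 1 + 1) (by omega)
  rw [blocksD_succ, Nat.sub_add_cancel hi1, blockD_eq_range',
    show n - i = n - i - 1 + 1 by omega, List.range'_succ] at ht
  rw [ht]
  simpa using (key (i - 1) (by omega)).2 _

lemma semiAdaptedD_wordD_of_sub_one_le {n i : ℕ} (hn : 2 ≤ n) (hi : i = n - 1 ∨ i = n) :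
    SemiAdaptedD n i (wordD n) := by
  have key : ∀ j ≤ n - 2, ∃ c, (c = n - 1 ∨ c = n) ∧
      actD n (blocksD n j) (alphaD n c) = alphaD n i ∧
      ∀ r, SemiAdaptedD n i (blocksD n j ++ c :: r) := by
    intro j
    induction j with
    | zero => exact fun _ => ⟨i, hi, rfl, semiAdaptedD_cons n i⟩
    | succ j ih =>
      intro hj
      obtain ⟨c, hc | hc, hroot, hsa⟩ := ih (by omega) <;> subst c <;> rw [blocksD_succ]
      · refine ⟨n, Or.inr rfl, ?_, SemiAdaptedD.append_blockD_n hn hj hroot hsa⟩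
        rw [actD_append, actD_blockD_alphaD_n hn hj, hroot]
      · refine ⟨n - 1, Or.inl rfl, ?_, SemiAdaptedD.append_blockD_sub_one hn hj hroot hsa⟩
        rw [actD_append, actD_blockD_alphaD_sub_one hn hj, hroot]
  rw [wordD_eq_blocksD_append]
  obtain ⟨c, hc | hc, -, hsa⟩ := key (n - 2) le_rfl <;> subst c
  · exact hsa [n]
  · exact SemiAdaptedD.of_commute (blocksD n (n - 2)) [] (by simp) (by rw [adjD_iff]; omega)
      (hsa [n - 1])

/-- The reduced word `𝐢^D` for the longest element of `W(D_n)` is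
`i`-semi-adapted for every `i ∈ {1,…,n}`. -/
theorem statement15 (n : ℕ) (hn : 4 ≤ n) (i : ℕ) (hi1 : 1 ≤ i) (hi2 : i ≤ n) :
    SemiAdaptedD n i (wordD n) := by
  rcases Nat.lt_or_ge i (n - 1) with hi | hi
  · exact semiAdaptedD_wordD_of_le_sub_two hi1 (by omega)
  · exact semiAdaptedD_wordD_of_sub_one_le (by omega) (by omega)
end
end

section
/- The map Ψ is a bijection from the set 𝒯(∞) of marginally large tableaux of type D_n onto the set of Kostant partitions of type D_n (functions from the n(n−1) positive roots of type D_n to ℤ_{≥0}). -/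
open scoped Classical

noncomputable section

/-!  Marginally large tableaux of type `D_n`.  The alphabet `J(D_n)` is encoded in `ℕ`:
the unbarred letter `k` (for `1 ≤ k ≤ n`) is `k`, and the barred letter `k̄` is `2n+1-k`
(so `n̄ = n+1`, `(n-1)-bar = n+2`, …, `1̄ = 2n`). -/

/-- The strict order on `J(D_n)`: numerically smaller, except that `n` and `n̄` are
incomparable. -/
def ltD (n x y : ℕ) : Prop := x < y ∧ ¬(x = n ∧ y = n+1)

/-- The (partial) order `≼` on `J(D_n)`. -/
def leD (n x y : ℕ) : Prop := x = y ∨ ltD n x y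

/-- A tableau is recorded as its list of rows (top row first). -/
abbrev TabD := List (List ℕ)

/-- A marginally large tableau of type `D_n`: exactly `n-1` rows of weakly decreasing
lengths; entries in `J(D_n)` weakly increasing along rows, with no row containing both `n`
and `n̄`; strictly increasing down columns except that `n` and `n̄` may be consecutive in a
column in either order; all entries of row `i` are `≼ ī` and the leftmost entry of row `i`
is `i`; and the number of entries equal to `i` in row `i` exceeds the number of boxes of
row `i+1` by exactly `1`. (Rows are 0-indexed: row index `r` is row `i = r+1`.) -/
def isMLTabD (n : ℕ) (T : TabD) : Prop :=
  T.length = n - 1 ∧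
  (∀ r, r < n-1 → ∀ x ∈ T.getD r [], 1 ≤ x ∧ x ≤ 2*n) ∧
  (∀ r, r + 1 < n-1 → (T.getD (r+1) []).length ≤ (T.getD r []).length) ∧
  (∀ r, r < n-1 → (T.getD r []).Chain' (leD n)) ∧
  (∀ r, r < n-1 → ¬(n ∈ T.getD r [] ∧ (n+1) ∈ T.getD r [])) ∧
  (∀ r, r + 1 < n-1 → ∀ cidx, cidx < (T.getD (r+1) []).length →
    (ltD n ((T.getD r []).getD cidx 0) ((T.getD (r+1) []).getD cidx 0) ∨
     ((T.getD r []).getD cidx 0 = n ∧ (T.getD (r+1) []).getD cidx 0 = n+1) ∨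
     ((T.getD r []).getD cidx 0 = n+1 ∧ (T.getD (r+1) []).getD cidx 0 = n))) ∧
  (∀ r, r < n-1 → ∀ x ∈ T.getD r [], leD n x (2*n - r)) ∧
  (∀ r, r < n-1 → (T.getD r []).head? = some (r+1)) ∧
  (∀ r, r < n-1 → (T.getD r []).count (r+1) = (T.getD (r+1) []).length + 1)

/-- The target of the `i`-arrow of the fundamental crystal of type `D_n` with source `x`
(if `x` is a source of an `i`-arrow). -/
def arrowD (n i x : ℕ) : Option ℕ :=
  if 1 ≤ i ∧ i ≤ n-2 then
    (if x = i then some (i+1) else if x = 2*n - i then some (2*n + 1 - i) else none)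
  else if i = n-1 then
    (if x = n-1 then some n else if x = n+1 then some (n+2) else none)
  else if i = n then
    (if x = n-1 then some (n+1) else if x = n then some (n+2) else none)
  else none

/-- The source of the `i`-arrow of the fundamental crystal of type `D_n` with target `x`
(if `x` is a target of an `i`-arrow). -/
def coArrowD (n i x : ℕ) : Option ℕ :=
  if 1 ≤ i ∧ i ≤ n-2 then
    (if x = i+1 then some i else if x = 2*n + 1 - i then some (2*n - i) else none)
  else if i = n-1 then
    (if x = n then some (n-1) else if x = n+2 then some (n+1) else none)
  else if i = n then
    (if x = n+1 then some (n-1) else if x = n+2 then some n else none)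
  else none

/-- The middle-Eastern reading: rows top to bottom, each row right to left (box positions
`(row index, column index)`). -/
def posME (T : TabD) : List (ℕ × ℕ) :=
  (T.mapIdx fun r row => ((List.range row.length).reverse).map fun cidx => (r, cidx)).flatten

/-- The far-Eastern reading: columns right to left, each column top to bottom. -/
def posFE (T : TabD) : List (ℕ × ℕ) :=
  ((List.range (T.getD 0 []).length).reverse).flatMap fun cidx =>
    (List.range T.length).filterMap fun r =>
      if cidx < (T.getD r []).length then some (r, cidx) else none

/-- The entry of the box of `T` at position `p = (row, column)`. -/
def entryAt (T : TabD) (p : ℕ × ℕ) : ℕ := (T.getD p.1 []).getD p.2 0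

/-- One step of bracket cancellation, on labeled brackets (`true` = '(' , `false` = ')').
The state is `(labels of uncanceled ')', stack of currently open '(')`. -/
def brStep {α : Type*} (st : List α × List α) (x : Bool × α) : List α × List α :=
  match x with
  | (true, lab) => (st.1, lab :: st.2)
  | (false, lab) =>
    match st.2 with
    | [] => (lab :: st.1, [])
    | _ :: rest => (st.1, rest)

/-- Sequentially cancel adjacent `()` pairs in a labeled bracket string. -/
def brReduce {α : Type*} (l : List (Bool × α)) : List α × List α := l.foldl brStep ([], [])

/-- The label of the leftmost uncanceled '(' in a labeled bracket string, if any. -/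
def brLeftOpen {α : Type*} (l : List (Bool × α)) : Option α := (brReduce l).2.getLast?

/-- The label of the rightmost uncanceled ')' in a labeled bracket string, if any. -/
def brRightClose {α : Type*} (l : List (Bool × α)) : Option α := (brReduce l).1.head?

/-- The `i`-bracket string of a tableau for a given reading: ')' for each box whose entry
is the target of an `i`-arrow, '(' for each box whose entry is its source, labeled by box
positions, in reading order. -/
def brTabD (n i : ℕ) (T : TabD) (reading : List (ℕ × ℕ)) : List (Bool × (ℕ × ℕ)) :=
  reading.filterMap fun p =>
    if (coArrowD n i (entryAt T p)).isSome then some (false, p)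
    else if (arrowD n i (entryAt T p)).isSome then some (true, p)
    else none

/-- Replace the entry of the box in row `r`, column `cidx` by `x`. -/
def setEntryD (T : TabD) (r cidx x : ℕ) : TabD := T.set r ((T.getD r []).set cidx x)

/-- Insert one column with entries `1, 2, …, l`: each row `r+1 ≤ l` receives one extra box
with entry `r+1`. -/
def insColD (l : ℕ) (T : TabD) : TabD :=
  T.mapIdx fun r row => if r + 1 ≤ l then List.orderedInsert (· ≤ ·) (r+1) row else row

/-- Delete one column with entries `1, 2, …, l`: each row `r+1 ≤ l` loses one box with
entry `r+1`. -/
def delColD (l : ℕ) (T : TabD) : TabD :=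
  T.mapIdx fun r row => if r + 1 ≤ l then row.erase (r+1) else row

/-- If `T` is not marginally large, insert exactly one column `1, …, l` (for the appropriate
`l`) so that the result is marginally large. -/
def normInsD (n : ℕ) (T : TabD) : TabD :=
  if isMLTabD n T then T
  else if h : ∃ l, isMLTabD n (insColD l T) then insColD (Nat.find h) T else T

/-- If `T` is not marginally large, delete exactly one column `1, …, l` (for the appropriate
`l`) so that the result is marginally large. -/
def normDelD (n : ℕ) (T : TabD) : TabD :=
  if isMLTabD n T then T
  else if h : ∃ l, isMLTabD n (delColD l T) then delColD (Nat.find h) T else T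

/-- The tableau crystal operator `f_i` with respect to a reading: replace the entry of the
box contributing the leftmost uncanceled '(' by the target of its `i`-arrow, then if the
result is not marginally large insert one column so that it is. -/
def fTabD (n i : ℕ) (reading : TabD → List (ℕ × ℕ)) (T : TabD) : TabD :=
  match brLeftOpen (brTabD n i T (reading T)) with
  | none => T
  | some p =>
      match arrowD n i (entryAt T p) with
      | none => T
      | some y => normInsD n (setEntryD T p.1 p.2 y)

/-- The tableau crystal operator `e_i` with respect to a reading: replace the entry of the
box contributing the rightmost uncanceled ')' by the source of its `i`-arrow, then if the
result is not marginally large delete one column so that it is; if there is no uncanceled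
')', the result is `0` (here: `none`). -/
def eTabD (n i : ℕ) (reading : TabD → List (ℕ × ℕ)) (T : TabD) : Option TabD :=
  match brRightClose (brTabD n i T (reading T)) with
  | none => none
  | some p =>
      match coArrowD n i (entryAt T p) with
      | none => none
      | some y => some (normDelD n (setEntryD T p.1 p.2 y))

/-- The contribution of row `j` (1-based, with entries `R`) of a marginally large tableau to
the coefficient of the positive root `β` under the map `Ψ`: each `j̄` contributes to
`c_(β_(j,j))` and `c_(γ_(j,j+1))`; each pair `(k, k̄)` (for `j < k ≤ n-1`, `min(a_k, b_k)`
pairs) contributes to `c_(β_(j,k))` and `c_(γ_(j,k+1))`; each remaining unbarred `k`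
(`j < k ≤ n`) contributes to `c_(β_(j,k-1))`; each remaining barred `k̄` (`j < k ≤ n`)
contributes to `c_(γ_(j,k))`. -/
def rowContribD (n j : ℕ) (R : List ℕ) (β : ℕ → ℤ) : ℕ :=
  (if β = betaD j j then R.count (2*n+1-j) else 0) +
  (if β = gammaD j (j+1) then R.count (2*n+1-j) else 0) +
  (∑ k ∈ Finset.Ioc j (n-1),
    ((if β = betaD j k then min (R.count k) (R.count (2*n+1-k)) else 0) +
     (if β = gammaD j (k+1) then min (R.count k) (R.count (2*n+1-k)) else 0) +
     (if β = betaD j (k-1) then R.count k - min (R.count k) (R.count (2*n+1-k)) else 0) +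
     (if β = gammaD j k then R.count (2*n+1-k) - min (R.count k) (R.count (2*n+1-k)) else 0))) +
  (if β = betaD j (n-1) then R.count n else 0) +
  (if β = gammaD j n then R.count (n+1) else 0)

/-- The map `Ψ` from marginally large tableaux of type `D_n` to Kostant partitions
(as functions from vectors to `ℕ`, supported on the positive roots). -/
def PsiD (n : ℕ) (T : TabD) : (ℕ → ℤ) → ℕ := fun β =>
  ∑ j ∈ Finset.Icc 1 (n-1), rowContribD n j (T.getD (j-1) []) β

/-- A Kostant partition of type `D_n`: a function from vectors to `ℕ` supported on the
positive roots of type `D_n`. -/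
def isKPD (n : ℕ) (c : (ℕ → ℤ) → ℕ) : Prop := ∀ β, ¬ PosRootD n β → c β = 0


/-! `Ψ` works row by row: row `j` of `T` contributes only to the roots `β_{j,k}` and `γ_{j,k}`.
These contributions determine every letter count of the row except that of `j`. Indeed
`min (c β_{j,k}) (c γ_{j,k+1})` is the number of pairs `(k, k̄)` (for `k = j`: the number of
letters `j̄`), since an unpaired `k+1` and an unpaired `(k+1)`-bar never occur together; for
`k + 1 = n` this is the rule that no row contains both `n` and `n̄`. Marginal largeness fixes the
number of letters `j`: one more than the length of row `j+1`. So the inverse `Φ` rebuilds the rows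
from the bottom up, each as the weakly increasing word with the recovered letter counts. -/

section Roots

variable {i k i' k' : ℕ}

lemma betaD_apply (x : ℕ) :
    betaD i k x = (if x = i then 1 else 0) - (if x = k + 1 then 1 else 0) := rfl

lemma gammaD_apply (x : ℕ) :
    gammaD i k x = (if x = i then 1 else 0) + (if x = k then 1 else 0) := rfl

lemma betaD_inj (hik : i ≤ k) (hik' : i' ≤ k') :
    betaD i k = betaD i' k' ↔ i = i' ∧ k = k' := by
  refine ⟨fun h => ?_, by rintro ⟨rfl, rfl⟩; rfl⟩
  have hi := congrFun h i
  have hk := congrFun h (k + 1)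
  simp only [betaD_apply] at hi hk
  split_ifs at hi hk <;> omega

lemma gammaD_inj (hik : i < k) (hik' : i' < k') :
    gammaD i k = gammaD i' k' ↔ i = i' ∧ k = k' := by
  refine ⟨fun h => ?_, by rintro ⟨rfl, rfl⟩; rfl⟩
  have hi := congrFun h i
  have hk := congrFun h k
  have hi' := congrFun h i'
  simp only [gammaD_apply] at hi hk hi'
  split_ifs at hi hk hi' <;> omega

lemma betaD_ne_gammaD (hik : i ≤ k) : betaD i k ≠ gammaD i' k' := by
  intro h
  have hk := congrFun h (k + 1)
  simp only [betaD_apply, gammaD_apply] at hk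
  split_ifs at hk <;> omega

lemma gammaD_ne_betaD (hik : i ≤ k) : gammaD i' k' ≠ betaD i k :=
  (betaD_ne_gammaD hik).symm

end Roots

section RowContrib

variable {n j k : ℕ}

/-- The number of pairs `(k, k̄)` in row `j` with letter counts `m`; at `k = j` it counts the
letters `j̄`, which play the role of the pairs `(j, j̄)`. -/
def rowPairs (n j : ℕ) (m : ℕ → ℕ) (k : ℕ) : ℕ :=
  if k = j then m (2*n+1-j) else if k < n then min (m k) (m (2*n+1-k)) else 0

lemma rowPairs_le_left {m : ℕ → ℕ} (hk : k ≠ j) : rowPairs n j m k ≤ m k := by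
  unfold rowPairs
  split_ifs <;> omega

lemma rowPairs_le_right {m : ℕ → ℕ} : rowPairs n j m k ≤ m (2*n+1-k) := by
  unfold rowPairs
  split_ifs <;> subst_vars <;> omega

lemma rowContribD_betaD (hjk : j ≤ k) (hk : k < n) (R : List ℕ) :
    rowContribD n j R (betaD j k) =
      rowPairs n j R.count k + (R.count (k+1) - rowPairs n j R.count (k+1)) := by
  rw [rowContribD, Finset.sum_congr rfl (g := fun k' =>
    (if k = k' then min (R.count k') (R.count (2*n+1-k')) else 0) +
    (if k + 1 = k' then R.count k' - min (R.count k') (R.count (2*n+1-k')) else 0)) ?summand]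
  case summand =>
    intro k' hk'
    rw [Finset.mem_Ioc] at hk'
    simp only [betaD_inj hjk hk'.1.le, betaD_inj hjk (Nat.le_sub_one_of_lt hk'.1),
      betaD_ne_gammaD hjk, true_and, if_false, add_zero, show k = k' - 1 ↔ k + 1 = k' by omega]
  simp only [Finset.sum_add_distrib, Finset.sum_ite_eq, Finset.mem_Ioc, betaD_inj hjk le_rfl,
    betaD_inj hjk (show j ≤ n - 1 by omega), betaD_ne_gammaD hjk, true_and, if_false, add_zero,
    rowPairs]
  obtain hk1 | rfl : k + 1 < n ∨ n = k + 1 := by omega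
  all_goals split_ifs <;> subst_vars <;> omega

lemma rowContribD_gammaD (hjk : j < k) (hk : k ≤ n) (R : List ℕ) :
    rowContribD n j R (gammaD j k) =
      rowPairs n j R.count (k-1) + (R.count (2*n+1-k) - rowPairs n j R.count k) := by
  rw [rowContribD, Finset.sum_congr rfl (g := fun k' =>
    (if k - 1 = k' then min (R.count k') (R.count (2*n+1-k')) else 0) +
    (if k = k' then R.count (2*n+1-k') - min (R.count k') (R.count (2*n+1-k')) else 0)) ?summand]
  case summand =>
    intro k' hk'
    rw [Finset.mem_Ioc] at hk'
    simp only [gammaD_inj hjk (Nat.lt_succ_of_lt hk'.1), gammaD_inj hjk hk'.1,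
      gammaD_ne_betaD hk'.1.le, gammaD_ne_betaD (Nat.le_sub_one_of_lt hk'.1), true_and,
      if_false, zero_add, add_zero, show k = k' + 1 ↔ k - 1 = k' by omega]
  simp only [Finset.sum_add_distrib, Finset.sum_ite_eq, Finset.mem_Ioc,
    gammaD_inj hjk (Nat.lt_succ_self j), gammaD_inj hjk (show j < n by omega),
    gammaD_ne_betaD le_rfl, gammaD_ne_betaD (show j ≤ n - 1 by omega), true_and, if_false,
    add_zero, zero_add, rowPairs]
  obtain hkn | rfl := hk.lt_or_eq
  · split_ifs <;> omega
  · rw [show 2 * k + 1 - k = k + 1 by omega]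
    split_ifs <;> omega

lemma rowContribD_eq_zero {β : ℕ → ℤ} (hj : j < n) (R : List ℕ)
    (hβ : ∀ k, j ≤ k → k ≤ n - 1 → β ≠ betaD j k) (hγ : ∀ k, j < k → k ≤ n → β ≠ gammaD j k) :
    rowContribD n j R β = 0 := by
  rw [rowContribD, Finset.sum_eq_zero fun k hk => ?summand]
  case summand =>
    rw [Finset.mem_Ioc] at hk
    simp only [if_neg (hβ k hk.1.le hk.2), if_neg (hγ (k+1) (by omega) (by omega)),
      if_neg (hβ (k-1) (by omega) (by omega)), if_neg (hγ k hk.1 (by omega)), add_zero]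
  simp only [if_neg (hβ j le_rfl (by omega)), if_neg (hγ (j+1) (by omega) (by omega)),
    if_neg (hβ (n-1) (by omega) le_rfl), if_neg (hγ n hj le_rfl), add_zero]

end RowContrib

section Psi

variable {n i k : ℕ}

lemma PsiD_betaD (hi : 1 ≤ i) (hik : i ≤ k) (hk : k < n) (T : TabD) :
    PsiD n T (betaD i k) = rowContribD n i (T.getD (i-1) []) (betaD i k) := by
  refine Finset.sum_eq_single_of_mem i (by simp only [Finset.mem_Icc]; omega) fun j hj hji => ?_
  rw [Finset.mem_Icc] at hj
  refine rowContribD_eq_zero (by omega) _ (fun k' hjk' _ => ?_) fun _ _ _ => betaD_ne_gammaD hik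
  rw [Ne, betaD_inj hik hjk']
  exact fun h => hji h.1.symm

lemma PsiD_gammaD (hi : 1 ≤ i) (hik : i < k) (hk : k ≤ n) (T : TabD) :
    PsiD n T (gammaD i k) = rowContribD n i (T.getD (i-1) []) (gammaD i k) := by
  refine Finset.sum_eq_single_of_mem i (by simp only [Finset.mem_Icc]; omega) fun j hj hji => ?_
  rw [Finset.mem_Icc] at hj
  refine rowContribD_eq_zero (by omega) _ (fun _ h _ => gammaD_ne_betaD h) fun k' hjk' _ => ?_
  rw [Ne, gammaD_inj hik hjk']
  exact fun h => hji h.1.symm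

lemma PsiD_isKPD (T : TabD) : isKPD n (PsiD n T) := fun β hβ =>
  Finset.sum_eq_zero fun j hj => by
    rw [Finset.mem_Icc] at hj
    exact rowContribD_eq_zero (by omega) _ (fun k h1 h2 h => hβ (.inl ⟨j, k, hj.1, h1, h2, h⟩))
      fun k h1 h2 h => hβ (.inr ⟨j, k, hj.1, h1, h2, h⟩)

end Psi

section Reconstruction

variable {n j k : ℕ} {c : (ℕ → ℤ) → ℕ} {R : List ℕ}

def rootPairs (n j : ℕ) (c : (ℕ → ℤ) → ℕ) (k : ℕ) : ℕ :=
  if k < n then min (c (betaD j k)) (c (gammaD j (k+1))) else 0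

def rowCounts (n j : ℕ) (c : (ℕ → ℤ) → ℕ) (a x : ℕ) : ℕ :=
  if x = j then a
  else if x ≤ n then c (betaD j (x-1)) - rootPairs n j c (x-1) + rootPairs n j c x
  else if x = 2*n+1-j then rootPairs n j c j
  else c (gammaD j (2*n+1-x)) - rootPairs n j c (2*n-x) + rootPairs n j c (2*n+1-x)

lemma rootPairs_of_lt (hk : k < n) :
    rootPairs n j c k = min (c (betaD j k)) (c (gammaD j (k+1))) := if_pos hk

lemma rootPairs_le_betaD : rootPairs n j c k ≤ c (betaD j k) := by
  unfold rootPairs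
  split_ifs <;> omega

lemma rootPairs_le_gammaD : rootPairs n j c k ≤ c (gammaD j (k+1)) := by
  unfold rootPairs
  split_ifs <;> omega

lemma rowCounts_self (a : ℕ) : rowCounts n j c a j = a := if_pos rfl

lemma rowCounts_of_le (a : ℕ) {x : ℕ} (hjx : j < x) (hx : x ≤ n) :
    rowCounts n j c a x = c (betaD j (x-1)) - rootPairs n j c (x-1) + rootPairs n j c x := by
  rw [rowCounts, if_neg hjx.ne', if_pos hx]

lemma rowCounts_bar_self (a : ℕ) (hj : j < n) :
    rowCounts n j c a (2*n+1-j) = rootPairs n j c j := by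
  rw [rowCounts, if_neg (by omega), if_neg (by omega), if_pos rfl]

lemma rowCounts_bar (a : ℕ) {y : ℕ} (hjy : j < y) (hy : y ≤ n) :
    rowCounts n j c a (2*n+1-y) =
      c (gammaD j y) - rootPairs n j c (y-1) + rootPairs n j c y := by
  rw [rowCounts, if_neg (by omega), if_neg (by omega), if_neg (by omega),
    show 2*n+1-(2*n+1-y) = y by omega, show 2*n-(2*n+1-y) = y-1 by omega]

lemma rowCounts_n_eq_zero_or (a : ℕ) (hj : j < n) :
    rowCounts n j c a n = 0 ∨ rowCounts n j c a (n+1) = 0 := by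
  rw [rowCounts_of_le a hj le_rfl, show n + 1 = 2*n+1-n by omega, rowCounts_bar a hj le_rfl,
    rootPairs_of_lt (k := n-1) (by omega), Nat.sub_add_cancel (by omega), rootPairs,
    if_neg (lt_irrefl n)]
  omega

section OfCounts

variable {a : ℕ} (hj : j < n)
  (hR : ∀ x, j ≤ x → x ≤ 2*n+1-j → R.count x = rowCounts n j c a x)
include hj hR

lemma rowPairs_of_count_eq (hjk : j ≤ k) : rowPairs n j R.count k = rootPairs n j c k := by
  dsimp only [rowPairs]
  split_ifs with hkj hkn
  · rw [hR _ (by omega) le_rfl, rowCounts_bar_self a hj, hkj]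
  · rw [hR k hjk (by omega), hR (2*n+1-k) (by omega) (by omega),
      rowCounts_of_le a (by omega) hkn.le, rowCounts_bar a (by omega) hkn.le, rootPairs_of_lt hkn,
      rootPairs_of_lt (k := k-1) (by omega), Nat.sub_add_cancel (by omega)]
    omega
  · rw [rootPairs, if_neg hkn]

lemma rowContribD_betaD_of_count_eq (hjk : j ≤ k) (hk : k < n) :
    rowContribD n j R (betaD j k) = c (betaD j k) := by
  rw [rowContribD_betaD hjk hk, rowPairs_of_count_eq hj hR hjk,
    rowPairs_of_count_eq hj hR (by omega), hR (k+1) (by omega) (by omega),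
    rowCounts_of_le (x := k+1) a (by omega) hk]
  simp only [Nat.add_sub_cancel]
  have : rootPairs n j c k ≤ c (betaD j k) := rootPairs_le_betaD
  omega

lemma rowContribD_gammaD_of_count_eq (hjk : j < k) (hk : k ≤ n) :
    rowContribD n j R (gammaD j k) = c (gammaD j k) := by
  rw [rowContribD_gammaD hjk hk, rowPairs_of_count_eq hj hR (by omega),
    rowPairs_of_count_eq hj hR hjk.le, hR (2*n+1-k) (by omega) (by omega),
    rowCounts_bar a hjk hk]
  have : rootPairs n j c (k-1) ≤ c (gammaD j (k-1+1)) := rootPairs_le_gammaD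
  rw [Nat.sub_add_cancel (by omega)] at this
  omega

end OfCounts

section OfContrib

variable (hj : j < n) (hnb : ¬(n ∈ R ∧ n + 1 ∈ R))
  (hβ : ∀ k, j ≤ k → k < n → c (betaD j k) = rowContribD n j R (betaD j k))
  (hγ : ∀ k, j < k → k ≤ n → c (gammaD j k) = rowContribD n j R (gammaD j k))
include hj hnb hβ hγ

lemma rootPairs_eq_rowPairs (hjk : j ≤ k) : rootPairs n j c k = rowPairs n j R.count k := by
  have hnb' : R.count n = 0 ∨ R.count (n+1) = 0 := by
    simp only [List.count_eq_zero]
    tauto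
  unfold rootPairs
  split_ifs with hkn
  · rw [hβ k hjk hkn, hγ (k+1) (by omega) hkn, rowContribD_betaD hjk hkn,
      rowContribD_gammaD (k := k+1) (by omega) hkn, Nat.add_sub_cancel]
    obtain hk1 | rfl : k + 1 < n ∨ n = k + 1 := by omega
    · simp only [rowPairs, if_neg (show k + 1 ≠ j by omega), if_pos hk1]
      omega
    · simp only [rowPairs, if_neg (show k + 1 ≠ j by omega), lt_irrefl, if_false,
        show 2*(k+1)+1-(k+1) = k+1+1 by omega]
      omega
  · rw [rowPairs, if_neg (by omega), if_neg hkn]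

lemma count_eq_rowCounts {x : ℕ} (hjx : j ≤ x) (hx : x ≤ 2*n+1-j) :
    R.count x = rowCounts n j c (R.count j) x := by
  obtain rfl | hjx := hjx.eq_or_lt
  · rw [rowCounts_self]
  obtain hxn | hxn := le_or_gt x n
  · rw [rowCounts_of_le _ hjx hxn, hβ (x-1) (by omega) (by omega),
      rowContribD_betaD (by omega) (by omega), Nat.sub_add_cancel (by omega),
      rootPairs_eq_rowPairs hj hnb hβ hγ (by omega), rootPairs_eq_rowPairs hj hnb hβ hγ hjx.le]
    have : rowPairs n j R.count x ≤ R.count x := rowPairs_le_left hjx.ne'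
    omega
  obtain rfl | hx := hx.eq_or_lt
  · rw [rowCounts_bar_self _ hj, rootPairs_eq_rowPairs hj hnb hβ hγ le_rfl, rowPairs, if_pos rfl]
  obtain ⟨y, rfl, hjy, hyn⟩ : ∃ y, x = 2*n+1-y ∧ j < y ∧ y ≤ n :=
    ⟨2*n+1-x, by omega, by omega, by omega⟩
  rw [rowCounts_bar _ hjy hyn, hγ y hjy hyn, rowContribD_gammaD hjy hyn,
    rootPairs_eq_rowPairs hj hnb hβ hγ (by omega), rootPairs_eq_rowPairs hj hnb hβ hγ hjy.le]
  have : rowPairs n j R.count y ≤ R.count (2*n+1-y) := rowPairs_le_right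
  omega

end OfContrib

end Reconstruction

section SortedRows

lemma List.count_flatMap_replicate {α : Type*} [BEq α] [LawfulBEq α] (cnt : α → ℕ) (x : α)
    {l : List α} (hl : l.Nodup) :
    (l.flatMap fun y => List.replicate (cnt y) y).count x = if x ∈ l then cnt x else 0 := by
  induction l with
  | nil => simp
  | cons y l ih =>
    rw [List.nodup_cons] at hl
    rw [List.flatMap_cons, List.count_append, ih hl.2, List.count_replicate]
    by_cases hxy : x = y
    · subst hxy
      simp [hl.1]
    · simp [hxy, Ne.symm hxy]

lemma List.Pairwise.flatMap_replicate {α : Type*} [Preorder α] (cnt : α → ℕ) {l : List α}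
    (hl : l.Pairwise (· ≤ ·)) :
    (l.flatMap fun y => List.replicate (cnt y) y).Pairwise (· ≤ ·) := by
  refine List.pairwise_flatMap.2 ⟨fun y _ => List.pairwise_replicate.2 (.inr le_rfl), ?_⟩
  refine hl.imp_of_mem fun _ _ hyz a ha b hb => ?_
  rw [List.eq_of_mem_replicate ha, List.eq_of_mem_replicate hb]
  exact hyz

variable {n j x : ℕ} {cnt : ℕ → ℕ}

def rowOfCounts (n j : ℕ) (cnt : ℕ → ℕ) : List ℕ :=
  (List.range' j (2*n+2-2*j)).flatMap fun y => List.replicate (cnt y) y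

lemma pairwise_rowOfCounts : (rowOfCounts n j cnt).Pairwise (· ≤ ·) :=
  .flatMap_replicate cnt ((List.pairwise_lt_range' (s := j)).imp le_of_lt)

lemma count_rowOfCounts (hj : j ≤ n) :
    (rowOfCounts n j cnt).count x = if j ≤ x ∧ x ≤ 2*n+1-j then cnt x else 0 := by
  rw [rowOfCounts, List.count_flatMap_replicate _ _ List.nodup_range']
  congr 1
  simp only [List.mem_range'_1, eq_iff_iff]
  omega

lemma mem_rowOfCounts (hx : x ∈ rowOfCounts n j cnt) : j ≤ x ∧ x ≤ 2*n+1-j := by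
  obtain ⟨y, hy, hxy⟩ := List.mem_flatMap.1 hx
  rw [List.eq_of_mem_replicate hxy]
  rw [List.mem_range'_1] at hy
  omega

lemma rowOfCounts_eq_replicate_append (hj : j ≤ n) :
    ∃ l, rowOfCounts n j cnt = List.replicate (cnt j) j ++ l := by
  rw [rowOfCounts, show 2*n+2-2*j = (2*n+1-2*j)+1 by omega, List.range'_succ, List.flatMap_cons]
  exact ⟨_, rfl⟩

lemma eq_rowOfCounts {R : List ℕ} (hj : j ≤ n) (hsort : R.Pairwise (· ≤ ·))
    (hmem : ∀ x ∈ R, j ≤ x ∧ x ≤ 2*n+1-j)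
    (hcount : ∀ x, j ≤ x → x ≤ 2*n+1-j → R.count x = cnt x) :
    R = rowOfCounts n j cnt := by
  refine List.Perm.eq_of_pairwise' hsort pairwise_rowOfCounts (List.perm_iff_count.2 fun x => ?_)
  rw [count_rowOfCounts hj]
  split_ifs with hx
  · exact hcount x hx.1 hx.2
  · exact List.count_eq_zero.2 fun h => hx (hmem x h)

end SortedRows

section Tableaux

variable {n : ℕ} {c : (ℕ → ℤ) → ℕ} {T : TabD}

lemma isChain_leD_of_pairwise {R : List ℕ} (hs : R.Pairwise (· ≤ ·))
    (hnb : ¬(n ∈ R ∧ n + 1 ∈ R)) : R.IsChain (leD n) := by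
  refine (hs.imp_of_mem fun {a b} ha hb hab => ?_).isChain
  obtain rfl | hlt := hab.eq_or_lt
  · exact .inl rfl
  · exact .inr ⟨hlt, fun ⟨han, hbn⟩ => hnb ⟨han ▸ ha, hbn ▸ hb⟩⟩

lemma pairwise_of_isChain_leD {R : List ℕ} (hc : R.IsChain (leD n)) : R.Pairwise (· ≤ ·) :=
  List.isChain_iff_pairwise.1 (hc.imp fun _ _ h => h.elim le_of_eq fun h => h.1.le)

/-- The bottom `t` rows of `Φ(c)`, i.e. rows `n-t, …, n-1`. -/
def lowerRows (n : ℕ) (c : (ℕ → ℤ) → ℕ) : ℕ → TabD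
  | 0 => []
  | t + 1 =>
    rowOfCounts n (n-1-t) (rowCounts n (n-1-t) c (((lowerRows n c t).getD 0 []).length + 1)) ::
      lowerRows n c t

def PhiD (n : ℕ) (c : (ℕ → ℤ) → ℕ) : TabD := lowerRows n c (n - 1)

lemma length_lowerRows (t : ℕ) : (lowerRows n c t).length = t := by
  induction t with
  | zero => rfl
  | succ t ih => rw [lowerRows, List.length_cons, ih]

lemma getD_lowerRows {t r : ℕ} (ht : t < n) (hr : r < t) :
    (lowerRows n c t).getD r [] = rowOfCounts n (n-t+r)
      (rowCounts n (n-t+r) c (((lowerRows n c t).getD (r+1) []).length + 1)) := by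
  induction t generalizing r with
  | zero => omega
  | succ t ih =>
    cases r with
    | zero =>
      simp only [lowerRows, List.getD_cons_zero, List.getD_cons_succ,
        show n-(t+1)+0 = n-1-t by omega]
    | succ r =>
      rw [lowerRows, List.getD_cons_succ, List.getD_cons_succ, ih (by omega) (by omega),
        show n-(t+1)+(r+1) = n-t+r by omega]

lemma length_PhiD : (PhiD n c).length = n - 1 := length_lowerRows _

lemma getD_PhiD {r : ℕ} (hr : r < n - 1) :
    (PhiD n c).getD r [] =
      rowOfCounts n (r+1) (rowCounts n (r+1) c (((PhiD n c).getD (r+1) []).length + 1)) := by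
  rw [PhiD, getD_lowerRows (by omega) hr, show n-(n-1)+r = r+1 by omega]

lemma count_getD_PhiD {r x : ℕ} (hr : r < n - 1) (hx : r + 1 ≤ x) (hx' : x ≤ 2*n+1-(r+1)) :
    ((PhiD n c).getD r []).count x =
      rowCounts n (r+1) c (((PhiD n c).getD (r+1) []).length + 1) x := by
  rw [getD_PhiD hr, count_rowOfCounts (by omega), if_pos ⟨hx, hx'⟩]

lemma getD_PhiD_eq_replicate_append {r : ℕ} (hr : r < n - 1) :
    ∃ l, (PhiD n c).getD r [] =
      List.replicate (((PhiD n c).getD (r+1) []).length + 1) (r+1) ++ l := by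
  rw [getD_PhiD hr]
  obtain ⟨l, hl⟩ := rowOfCounts_eq_replicate_append (n := n) (j := r+1)
    (cnt := rowCounts n (r+1) c (((PhiD n c).getD (r+1) []).length + 1)) (by omega)
  rw [rowCounts_self] at hl
  exact ⟨l, hl⟩

lemma PsiD_PhiD (hc : isKPD n c) : PsiD n (PhiD n c) = c := by
  funext β
  by_cases hβ : PosRootD n β
  · rcases hβ with ⟨i, k, hi, hik, hk, rfl⟩ | ⟨i, k, hi, hik, hk, rfl⟩
    all_goals obtain ⟨r, rfl⟩ : ∃ r, i = r + 1 := ⟨i - 1, by omega⟩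
    · rw [PsiD_betaD hi hik (by omega), Nat.add_sub_cancel]
      exact rowContribD_betaD_of_count_eq (by omega) (fun x => count_getD_PhiD (by omega)) hik
        (by omega)
    · rw [PsiD_gammaD hi hik hk, Nat.add_sub_cancel]
      exact rowContribD_gammaD_of_count_eq (by omega) (fun x => count_getD_PhiD (by omega)) hik hk
  · rw [PsiD_isKPD _ β hβ, hc β hβ]

lemma isMLTabD_PhiD (c : (ℕ → ℤ) → ℕ) : isMLTabD n (PhiD n c) := by
  have hmem : ∀ r < n - 1, ∀ x ∈ (PhiD n c).getD r [], r + 1 ≤ x ∧ x ≤ 2*n+1-(r+1) :=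
    fun r hr x hx => mem_rowOfCounts (by rwa [← getD_PhiD hr])
  have hcount : ∀ r < n - 1,
      ((PhiD n c).getD r []).count (r+1) = ((PhiD n c).getD (r+1) []).length + 1 :=
    fun r hr => by rw [count_getD_PhiD hr le_rfl (by omega), rowCounts_self]
  have hnb : ∀ r < n - 1, ¬(n ∈ (PhiD n c).getD r [] ∧ n + 1 ∈ (PhiD n c).getD r []) :=
    fun r hr => by
      simp only [← List.count_pos_iff, count_getD_PhiD hr (x := n) (by omega) (by omega),
        count_getD_PhiD hr (x := n+1) (by omega) (by omega)]
      have := rowCounts_n_eq_zero_or (n := n) (j := r+1) (c := c)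
        (((PhiD n c).getD (r+1) []).length + 1) (by omega)
      omega
  refine ⟨length_PhiD, fun r hr x hx => ?_, fun r hr => ?_, fun r hr => ?_, hnb,
    fun r hr i hi => ?_, fun r hr x hx => ?_, fun r hr => ?_, hcount⟩
  · have := hmem r hr x hx
    omega
  · have := List.count_le_length (a := r+1) (l := (PhiD n c).getD r [])
    rw [hcount r (by omega)] at this
    omega
  · exact isChain_leD_of_pairwise (by rw [getD_PhiD hr]; exact pairwise_rowOfCounts) (hnb r hr)
  · obtain ⟨l, hl⟩ := getD_PhiD_eq_replicate_append (n := n) (c := c) (r := r) (by omega)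
    have hleft : ((PhiD n c).getD r []).getD i 0 = r + 1 := by
      rw [hl, List.getD_append _ _ _ _ (by rw [List.length_replicate]; omega),
        List.getD_replicate _ (by omega)]
    have hright := hmem (r+1) hr _ (List.getD_eq_getElem _ 0 hi ▸ List.getElem_mem hi)
    exact .inl ⟨by omega, by omega⟩
  · have := hmem r hr x hx
    by_cases hx : x = 2*n - r
    · exact .inl hx
    · exact .inr ⟨by omega, by omega⟩
  · obtain ⟨l, hl⟩ := getD_PhiD_eq_replicate_append (c := c) hr
    rw [hl, List.replicate_succ]
    rfl

lemma getD_eq_rowOfCounts_PsiD (hT : isMLTabD n T) {r : ℕ} (hr : r < n - 1) :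
    T.getD r [] =
      rowOfCounts n (r+1) (rowCounts n (r+1) (PsiD n T) ((T.getD r []).count (r+1))) := by
  obtain ⟨-, -, -, hchain, hnb, -, hle, hhead, -⟩ := hT
  have hsort := pairwise_of_isChain_leD (hchain r hr)
  obtain ⟨tail, htail⟩ := List.head?_eq_some_iff.1 (hhead r hr)
  have hmem : ∀ x ∈ T.getD r [], r + 1 ≤ x ∧ x ≤ 2*n+1-(r+1) := fun x hx => by
    have hlow : r + 1 ≤ x := by
      rw [htail] at hsort hx
      exact (List.mem_cons.1 hx).elim ge_of_eq fun h => List.rel_of_pairwise_cons hsort h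
    rcases hle r hr x hx with h | ⟨h, -⟩ <;> omega
  refine eq_rowOfCounts (by omega) hsort hmem fun x hx hx' =>
    count_eq_rowCounts (by omega) (hnb r hr) (fun k h1 h2 => ?_) (fun k h1 h2 => ?_) hx hx'
  · rw [PsiD_betaD (by omega) h1 h2, Nat.add_sub_cancel]
  · rw [PsiD_gammaD (by omega) h1 h2, Nat.add_sub_cancel]

lemma lowerRows_PsiD (hT : isMLTabD n T) {t : ℕ} (ht : t ≤ n - 1) :
    lowerRows n (PsiD n T) t = T.drop (n - 1 - t) := by
  induction t with
  | zero => exact (List.drop_eq_nil_of_le hT.1.le).symm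
  | succ t ih =>
    obtain ⟨r, hr⟩ : ∃ r, n - 1 - t = r + 1 := ⟨n - 2 - t, by omega⟩
    rw [lowerRows, ih (by omega), List.drop_eq_getElem_cons (i := n - 1 - (t + 1))
      (by rw [hT.1]; omega), show n - 1 - (t + 1) + 1 = n - 1 - t by omega, hr,
      ← List.getD_eq_getElem _ [], show n - 1 - (t + 1) = r by omega]
    have hhead : (T.drop (r + 1)).getD 0 [] = T.getD (r + 1) [] := by
      simp only [List.getD_eq_getElem?_getD, List.getElem?_drop, add_zero]
    have ⟨_, _, _, _, _, _, _, _, hcount⟩ := hT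
    rw [hhead, ← hcount r (by omega), ← getD_eq_rowOfCounts_PsiD hT (by omega)]

lemma PhiD_PsiD (hT : isMLTabD n T) : PhiD n (PsiD n T) = T := by
  rw [PhiD, lowerRows_PsiD hT le_rfl, Nat.sub_self, List.drop_zero]

end Tableaux

theorem statement18_general (n : ℕ) :
    Set.BijOn (PsiD n) {T | isMLTabD n T} {c | isKPD n c} :=
  Set.InvOn.bijOn (f' := PhiD n) ⟨fun _ hT => PhiD_PsiD hT, fun _ hc => PsiD_PhiD hc⟩
    (fun T _ => PsiD_isKPD T) fun c _ => isMLTabD_PhiD c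

/-- `Ψ` is a bijection from the set `𝒯(∞)` of marginally large tableaux of
type `D_n` onto the set of Kostant partitions of type `D_n`. -/
theorem statement18 (n : ℕ) (hn : 4 ≤ n) :
    Set.BijOn (PsiD n) {T | isMLTabD n T} {c | isKPD n c} :=
  statement18_general n

end
end
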